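/- arXiv:2106.07752 — 3 statements merged into one kernel-verified Lean document; each statement's English description precedes it below -/
import Mathlib

section
/- Let n ≥ 1 and let u ∈ ℝ^{n×n} with u_{ij} ≥ 0. Let π be any permutation of {1,…,n} attaining OPT(u), and set b_j := C_j(u) = OPT_{+j}(u) − OPT(u) and a_i := u_{i,π(i)} − C_{π(i)}(u). Then for all players i and items j, u_{ij} ≤ a_i + b_j, and Σ_i a_i + Σ_j b_j = OPT(u). That is, the optimal assignment π together with the VCG prices is an envy-free outcome, and (a,b) is an optimal solution to the dual of the assignment linear program. -/
open Finset

/-- The optimal welfare of the assignment problem. -/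
noncomputable def OPT (n : ℕ) (u : Fin n → Fin n → ℝ) : ℝ :=
  sSup {v | ∃ π : Equiv.Perm (Fin n), v = ∑ i, u i (π i)}

/-- The optimal welfare when a second copy of item `j` is available. -/
noncomputable def OPTplus (n : ℕ) (u : Fin n → Fin n → ℝ) (j : Fin n) : ℝ :=
  sSup {v | ∃ π : Fin n → Fin n,
    (∀ ℓ : Fin n, ℓ ≠ j → (Finset.univ.filter (fun i => π i = ℓ)).card ≤ 1) ∧
    (Finset.univ.filter (fun i => π i = j)).card ≤ 2 ∧
    v = ∑ i, u i (π i)}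

/-- The VCG price of item `j`. -/
noncomputable def price (n : ℕ) (u : Fin n → Fin n → ℝ) (j : Fin n) : ℝ :=
  OPTplus n u j - OPT n u

/-!
Write `k = π i`. Envy-freeness is the inequality `OPT_{+k} + u i j ≤ OPT_{+j} + u i k`, and the
dual objective telescopes to `∑ i, u i (π i)`.

A `+k` assignment is `redirect ℓ k ∘ ρ` for a permutation `ρ`, where `ℓ` is the item left unsold.
Moving player `i` in `π` to item `j` gives `redirect k j ∘ π`. Exchanging `ρ` and `π` along the
cycle of `π⁻¹ * ρ` through `i` splits these two assignments into a permutation (worth at most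
`OPT`) and a `+j` assignment (worth at most `OPT_{+j}`), as long as that cycle misses `ρ⁻¹ ℓ`.
Otherwise the two players who share item `k` can trade the roles of `k` and `ℓ` in `ρ`. This
multiplies `π⁻¹ * ρ` by a transposition of two points on the same cycle, which splits that cycle.
-/

open Equiv Equiv.Perm

namespace Equiv.Perm

variable {α : Type*} [DecidableEq α]

theorem SameCycle.not_sameCycle_mul_swap [Finite α] {γ : Perm α} {x y : α} (hxy : x ≠ y)
    (h : γ.SameCycle x y) : ¬ (γ * swap x y).SameCycle x y := by
  have hex : ∃ m : ℕ, (γ ^ m) x = y := h.exists_nat_pow_eq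
  have hm : (γ ^ Nat.find hex) x = y := Nat.find_spec hex
  have hm_pos : 0 < Nat.find hex := Nat.pos_of_ne_zero fun h0 => hxy (by simpa [h0] using hm)
  -- the arc `γ x, γ² x, …, y` of the `γ`-cycle is closed under `γ * swap x y` and misses `x`
  let T : Set α := {z | ∃ t, 0 < t ∧ t ≤ Nat.find hex ∧ (γ ^ t) x = z}
  have hxT : x ∉ T := by
    rintro ⟨t, ht, htm, hx⟩
    refine Nat.find_min hex (show Nat.find hex - t < Nat.find hex by omega) ?_
    calc (γ ^ (Nat.find hex - t)) x = (γ ^ (Nat.find hex - t)) ((γ ^ t) x) := by rw [hx]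
      _ = y := by rw [← mul_apply, ← pow_add, Nat.sub_add_cancel htm, hm]
  have hT : ∀ z ∈ T, (γ * swap x y) z ∈ T := by
    rintro z ⟨t, ht, htm, rfl⟩
    rcases htm.lt_or_eq with htm | rfl
    · have hy : (γ ^ t) x ≠ y := Nat.find_min hex htm
      have hx : (γ ^ t) x ≠ x := fun hx => hxT ⟨t, ht, htm.le, hx⟩
      refine ⟨t + 1, t.succ_pos, htm, ?_⟩
      rw [mul_apply, swap_apply_of_ne_of_ne hx hy, pow_succ', mul_apply]
    · exact ⟨1, one_pos, hm_pos, by rw [hm, mul_apply, swap_apply_right, pow_one]⟩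
  have hpow : ∀ k : ℕ, ((γ * swap x y) ^ k) y ∈ T := fun k => by
    induction k with
    | zero => exact ⟨_, hm_pos, le_rfl, hm⟩
    | succ k ih => rw [pow_succ', mul_apply]; exact hT _ ih
  intro hc
  obtain ⟨k, hk⟩ := hc.symm.exists_nat_pow_eq
  exact hxT (hk ▸ hpow k)

theorem mul_cycleOf_inv_mul_apply [Fintype α] (π ρ : Perm α) (i p : α) :
    (π * (π⁻¹ * ρ).cycleOf i) p = if (π⁻¹ * ρ).SameCycle i p then ρ p else π p := by
  rw [mul_apply, cycleOf_apply]
  split_ifs <;> simp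

end Equiv.Perm

section Redirect

variable {α : Type*} [DecidableEq α]

def redirect (ℓ k x : α) : α := if x = ℓ then k else x

@[simp] theorem redirect_self (ℓ k : α) : redirect ℓ k ℓ = k := if_pos rfl

theorem redirect_of_ne {ℓ k x : α} (h : x ≠ ℓ) : redirect ℓ k x = x := if_neg h

@[simp] theorem redirect_same (k x : α) : redirect k k x = x := by
  unfold redirect; split_ifs with h <;> simp [h]

theorem redirect_mul_swap_apply (ρ : Perm α) (ℓ k p : α) :
    redirect ℓ k ((ρ * swap (ρ⁻¹ k) (ρ⁻¹ ℓ)) p) = redirect ℓ k (ρ p) := by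
  rw [mul_apply, swap_apply_def]
  split_ifs <;> simp_all [redirect]

variable [Fintype α]

theorem card_filter_redirect_le_one (ρ : Perm α) {ℓ k m : α} (hm : m ≠ k) :
    #{p | redirect ℓ k (ρ p) = m} ≤ 1 := by
  refine card_le_one.2 fun p hp q hq => ρ.injective ?_
  simp only [mem_filter, mem_univ, true_and] at hp hq
  unfold redirect at hp hq
  split_ifs at hp hq <;> simp_all

theorem card_filter_redirect_le_two (ρ : Perm α) (ℓ k : α) :
    #{p | redirect ℓ k (ρ p) = k} ≤ 2 := by
  refine (card_le_card (t := {ρ.symm ℓ, ρ.symm k}) fun p hp => ?_).trans card_le_two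
  simp only [mem_filter, mem_univ, true_and] at hp
  unfold redirect at hp
  split_ifs at hp with h
  · simp [← h]
  · simp [← hp]

theorem exists_perm_redirect_eq {σ : α → α} {k : α}
    (h₁ : ∀ m, m ≠ k → #{p | σ p = m} ≤ 1) (h₂ : #{p | σ p = k} ≤ 2) :
    ∃ (ρ : Perm α) (ℓ : α), ∀ p, σ p = redirect ℓ k (ρ p) := by
  by_cases hσ : Function.Injective σ
  · exact ⟨Equiv.ofBijective σ (Finite.injective_iff_bijective.1 hσ), k, fun p => by simp⟩
  obtain ⟨p₁, p₂, heq, hne⟩ : ∃ p₁ p₂, σ p₁ = σ p₂ ∧ p₁ ≠ p₂ := by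
    simpa [Function.Injective] using hσ
  obtain ⟨ℓ, hℓ⟩ : ∃ ℓ, ∀ p, σ p ≠ ℓ := by
    simpa [Function.Surjective] using mt Finite.injective_iff_surjective.2 hσ
  have hσ₂ : σ p₂ = k := by
    by_contra hk
    exact hne (card_le_one.1 (h₁ _ hk) p₁ (by simp [heq]) p₂ (by simp))
  have hinj : Function.Injective (Function.update σ p₂ ℓ) := by
    intro p q hpq
    rcases eq_or_ne p p₂ with hp | hp <;> rcases eq_or_ne q p₂ with hq | hq
    · rw [hp, hq]
    · exact absurd (by simpa [hp, hq] using hpq.symm) (hℓ q)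
    · exact absurd (by simpa [hp, hq] using hpq) (hℓ p)
    · simp only [Function.update_of_ne hp, Function.update_of_ne hq] at hpq
      by_contra hpq'
      by_cases hk : σ p = k
      · exact h₂.not_gt (two_lt_card_iff.2 ⟨p, q, p₂, by simp [hk], by simp [← hpq, hk],
          by simp [hσ₂], hpq', hp, hq⟩)
      · exact hpq' (card_le_one.1 (h₁ _ hk) p (by simp) q (by simp [hpq]))
  refine ⟨Equiv.ofBijective _ (Finite.injective_iff_bijective.1 hinj), ℓ, fun p => ?_⟩
  rcases eq_or_ne p p₂ with hp | hp
  · simp [hp, hσ₂]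
  · simp [Function.update_of_ne hp, redirect_of_ne (hℓ p)]

theorem sum_redirect_apply (w : α → α → ℝ) (π : Perm α) (i j : α) :
    ∑ p, w p (redirect (π i) j (π p)) = ∑ p, w p (π p) - w i (π i) + w i j := by
  rw [Fintype.sum_eq_add_sum_compl i, Fintype.sum_eq_add_sum_compl i fun p => w p (π p),
    redirect_self]
  have : ∑ p ∈ {i}ᶜ, w p (redirect (π i) j (π p)) = ∑ p ∈ {i}ᶜ, w p (π p) :=
    sum_congr rfl fun p hp => by
      rw [redirect_of_ne (π.injective.ne (by simpa using hp))]
  rw [this]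
  ring

theorem exists_perm_sum_add_sum_redirect_eq (w : α → α → ℝ) (π ρ : Perm α) {i ℓ : α} (j : α)
    (hℓ : ℓ ≠ π i) (hcyc : ¬ (π⁻¹ * ρ).SameCycle i (ρ⁻¹ ℓ)) :
    ∃ τ τ' : Perm α, ∑ p, w p (redirect ℓ (π i) (ρ p)) + ∑ p, w p (redirect (π i) j (π p)) =
      ∑ p, w p (τ p) + ∑ p, w p (redirect ℓ j (τ' p)) := by
  set γ := π⁻¹ * ρ
  set a := ρ⁻¹ ℓ
  have hτ : ∀ p, (π * γ.cycleOf i) p = if γ.SameCycle i p then ρ p else π p :=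
    mul_cycleOf_inv_mul_apply π ρ i
  have hτ' : ∀ p, (ρ * γ⁻¹.cycleOf i) p = if γ.SameCycle i p then π p else ρ p := fun p => by
    have h := mul_cycleOf_inv_mul_apply ρ π i p
    simpa only [show ρ⁻¹ * π = γ⁻¹ by simp [γ], sameCycle_inv] using h
  refine ⟨π * γ.cycleOf i, ρ * γ⁻¹.cycleOf i * swap i a, ?_⟩
  rw [← sum_add_distrib, ← sum_add_distrib]
  refine sum_congr rfl fun p _ => ?_
  have hρ : ∀ q, ρ q = ℓ ↔ q = a := fun _ => ρ.eq_symm_apply.symm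
  have hρa : ρ a = ℓ := (hρ a).2 rfl
  have hi : γ.SameCycle i i := SameCycle.refl _ _
  have hai : a ≠ i := fun h => hcyc (h ▸ hi)
  -- `π` and `ρ` map the cycle of `i` onto the same items, and `ρ` maps `a`, which is off it, to `ℓ`
  have hπℓ : ∀ q, γ.SameCycle i q → π q ≠ ℓ := fun q hq hqℓ =>
    hcyc (sameCycle_apply_right.1 (show γ a = q by simp [γ, a, ← hqℓ] ▸ hq))
  rw [hτ, mul_apply, hτ']
  rcases eq_or_ne p i with rfl | hpi
  · simp [hi, hcyc, hρa, redirect_of_ne (mt (hρ p).1 hai.symm)]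
  rcases eq_or_ne p a with rfl | hpa
  · simp [hi, hcyc, hρa, redirect_of_ne hℓ.symm, redirect_of_ne (π.injective.ne hpi),
      add_comm]
  rw [swap_apply_of_ne_of_ne hpi hpa, redirect_of_ne (mt (hρ p).1 hpa),
    redirect_of_ne (π.injective.ne hpi)]
  split_ifs with hs
  · rw [redirect_of_ne (hπℓ p hs)]
  · rw [redirect_of_ne (mt (hρ p).1 hpa), add_comm]

theorem not_sameCycle_mul_swap_of_sameCycle (π ρ : Perm α) {i ℓ : α} (hℓ : ℓ ≠ π i)
    (hcyc : (π⁻¹ * ρ).SameCycle i (ρ⁻¹ ℓ)) :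
    ¬ (π⁻¹ * (ρ * swap (ρ⁻¹ (π i)) (ρ⁻¹ ℓ))).SameCycle i
      ((ρ * swap (ρ⁻¹ (π i)) (ρ⁻¹ ℓ))⁻¹ ℓ) := by
  have hne : ρ⁻¹ (π i) ≠ ρ⁻¹ ℓ := ρ⁻¹.injective.ne hℓ.symm
  have h₁ : (π⁻¹ * ρ) (ρ⁻¹ (π i)) = i := by simp
  have h₂ : (π⁻¹ * ρ * swap (ρ⁻¹ (π i)) (ρ⁻¹ ℓ)) (ρ⁻¹ ℓ) = i := by
    rw [mul_apply, swap_apply_right, h₁]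
  rw [mul_inv_rev, swap_inv, mul_apply, swap_apply_right, ← mul_assoc]
  rw [← h₁, sameCycle_apply_left] at hcyc
  intro h
  apply hcyc.not_sameCycle_mul_swap hne
  rwa [sameCycle_comm, ← sameCycle_apply_left, h₂]

end Redirect

section Assignment
variable {n : ℕ} (u : Fin n → Fin n → ℝ)

theorem sum_le_OPT (e : Perm (Fin n)) : ∑ i, u i (e i) ≤ OPT n u :=
  le_csSup ((Set.finite_range fun e : Perm (Fin n) => ∑ i, u i (e i)).subset
    (by rintro _ ⟨e, rfl⟩; exact ⟨e, rfl⟩)).bddAbove ⟨e, rfl⟩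

theorem isGreatest_OPTplus (k : Fin n) :
    IsGreatest {v | ∃ (ρ : Perm (Fin n)) (ℓ : Fin n), v = ∑ i, u i (redirect ℓ k (ρ i))}
      (OPTplus n u k) := by
  let S : Set ℝ := {v | ∃ σ : Fin n → Fin n, (∀ ℓ : Fin n, ℓ ≠ k → #{i | σ i = ℓ} ≤ 1) ∧
    #{i | σ i = k} ≤ 2 ∧ v = ∑ i, u i (σ i)}
  have hfin : S.Finite := (Set.finite_range fun σ : Fin n → Fin n => ∑ i, u i (σ i)).subset
    (by rintro _ ⟨σ, -, -, rfl⟩; exact ⟨σ, rfl⟩)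
  have hmem : ∀ (ρ : Perm (Fin n)) (ℓ : Fin n), ∑ i, u i (redirect ℓ k (ρ i)) ∈ S :=
    fun ρ ℓ => ⟨_, fun _ hm => card_filter_redirect_le_one ρ hm,
      card_filter_redirect_le_two ρ ℓ k, rfl⟩
  refine ⟨?_, fun _ ⟨ρ, ℓ, hv⟩ => hv ▸ le_csSup hfin.bddAbove (hmem ρ ℓ)⟩
  obtain ⟨σ, h₁, h₂, hσ⟩ := Set.Nonempty.csSup_mem ⟨_, hmem 1 k⟩ hfin
  obtain ⟨ρ, ℓ, hρ⟩ := exists_perm_redirect_eq h₁ h₂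
  exact ⟨ρ, ℓ, hσ.trans (by simp only [hρ])⟩

variable {π : Perm (Fin n)}

theorem sum_redirect_add_le_of_not_sameCycle (hπ : ∑ i, u i (π i) = OPT n u) (ρ : Perm (Fin n))
    {i ℓ : Fin n} (j : Fin n) (hℓ : ℓ ≠ π i) (hcyc : ¬ (π⁻¹ * ρ).SameCycle i (ρ⁻¹ ℓ)) :
    ∑ p, u p (redirect ℓ (π i) (ρ p)) + u i j ≤ OPTplus n u j + u i (π i) := by
  obtain ⟨τ, τ', h⟩ := exists_perm_sum_add_sum_redirect_eq u π ρ j hℓ hcyc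
  have hτ := sum_le_OPT u τ
  have hτ' := (isGreatest_OPTplus u j).2 ⟨τ', ℓ, rfl⟩
  rw [sum_redirect_apply] at h
  linarith

theorem OPTplus_add_le (hπ : ∑ i, u i (π i) = OPT n u) (i j : Fin n) :
    OPTplus n u (π i) + u i j ≤ OPTplus n u j + u i (π i) := by
  obtain ⟨ρ, ℓ, hρ⟩ := (isGreatest_OPTplus u (π i)).1
  rw [hρ]
  rcases eq_or_ne ℓ (π i) with rfl | hℓ
  · have hf := (isGreatest_OPTplus u j).2 ⟨π, π i, rfl⟩
    rw [sum_redirect_apply] at hf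
    simp only [redirect_same]
    linarith [sum_le_OPT u ρ]
  by_cases hcyc : (π⁻¹ * ρ).SameCycle i (ρ⁻¹ ℓ)
  · simp_rw [← redirect_mul_swap_apply ρ ℓ (π i)]
    exact sum_redirect_add_le_of_not_sameCycle u hπ _ j hℓ
      (not_sameCycle_mul_swap_of_sameCycle π ρ hℓ hcyc)
  · exact sum_redirect_add_le_of_not_sameCycle u hπ ρ j hℓ hcyc

end Assignment

theorem vcg_prices_dual_solution_general (n : ℕ)
    (u : Fin n → Fin n → ℝ)
    (π : Equiv.Perm (Fin n)) (hπ : ∑ i, u i (π i) = OPT n u) :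
    (∀ i j, u i j ≤ (u i (π i) - price n u (π i)) + price n u j) ∧
    (∑ i, (u i (π i) - price n u (π i))) + (∑ j, price n u j) = OPT n u := by
  refine ⟨fun i j => ?_, ?_⟩
  · have := OPTplus_add_le u hπ i j
    simp only [price]
    linarith
  · rw [sum_sub_distrib, Equiv.sum_comp π (price n u), hπ, sub_add_cancel]

/-- An optimal assignment together with the VCG prices forms an envy-free
outcome, and the corresponding `(a, b)` is an optimal dual solution of the
assignment linear program: `u i j ≤ a i + b j` with total `OPT u`. -/
theorem vcg_prices_dual_solution (n : ℕ) (hn : 1 ≤ n)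
    (u : Fin n → Fin n → ℝ) (hu : ∀ i j, 0 ≤ u i j)
    (π : Equiv.Perm (Fin n)) (hπ : ∑ i, u i (π i) = OPT n u) :
    (∀ i j, u i j ≤ (u i (π i) - price n u (π i)) + price n u j) ∧
    (∑ i, (u i (π i) - price n u (π i))) + (∑ j, price n u j) = OPT n u :=
  vcg_prices_dual_solution_general n u π hπ
end

section
/- Let n ≥ 1, let u ∈ ℝ^{n×n} with 0 ≤ u_{ij} ≤ 1, let λ ∈ ℝ^n with λ_i ≥ 0, and set u'_{kj} := λ_k·u_{kj}. Let C_j := C_j(u') be the VCG prices for u', and suppose Σ_j C_j ≤ n. Fix a player i and let u_i* := max_ℓ u_{iℓ}. If λ_i·(u_i* − u_{ij}) > n for every item j with u_{ij} < u_i*, then every permutation π of {1,…,n} attaining OPT(u') satisfies u_{i,π(i)} = u_i*; i.e., a player with sufficiently large weight is always allocated one of her favorite items. -/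
open Finset

/-!
If the optimal assignment `π` gives player `i` an item `π i` she values strictly less than
her favorite `j₀`, then moving `i` to a second copy of `j₀` is feasible for `OPTplus`, so the
VCG price of `j₀` is at least `λ_i (u_i* - u_{i,π(i)}) > n`. VCG prices are nonnegative, so
this single price already exceeds the total budget `n`.
-/

lemma card_filter_apply_eq_le_one {α β : Type*} [Fintype α] [DecidableEq β] {f : α → β}
    (hf : Function.Injective f) (b : β) : #{a | f a = b} ≤ 1 :=
  card_le_one.mpr fun _ ha _ hb => hf ((mem_filter.1 ha).2.trans (mem_filter.1 hb).2.symm)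

section Assignment

variable {n : ℕ} (u : Fin n → Fin n → ℝ)

lemma exists_perm_sum_eq_OPT : ∃ π : Equiv.Perm (Fin n), ∑ i, u i (π i) = OPT n u := by
  set S := {v | ∃ π : Equiv.Perm (Fin n), v = ∑ i, u i (π i)}
  have hfin : S.Finite := (Set.finite_range fun π : Equiv.Perm (Fin n) => ∑ i, u i (π i)).subset
    fun _ ⟨π, hπ⟩ => ⟨π, hπ.symm⟩
  obtain ⟨π, hπ⟩ := Set.Nonempty.csSup_mem (s := S) ⟨_, 1, rfl⟩ hfin
  exact ⟨π, hπ.symm⟩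

lemma sum_le_OPTplus {j : Fin n} (σ : Fin n → Fin n)
    (hσ : ∀ ℓ, ℓ ≠ j → #{k | σ k = ℓ} ≤ 1) (hσj : #{k | σ k = j} ≤ 2) :
    ∑ k, u k (σ k) ≤ OPTplus n u j := by
  refine le_csSup ?_ ⟨σ, hσ, hσj, rfl⟩
  refine ((Set.finite_range fun τ : Fin n → Fin n => ∑ k, u k (τ k)).subset ?_).bddAbove
  rintro _ ⟨τ, -, -, rfl⟩
  exact ⟨τ, rfl⟩

lemma sum_perm_le_OPTplus (π : Equiv.Perm (Fin n)) (j : Fin n) :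
    ∑ k, u k (π k) ≤ OPTplus n u j :=
  sum_le_OPTplus u π (fun ℓ _ => card_filter_apply_eq_le_one π.injective ℓ)
    ((card_filter_apply_eq_le_one π.injective j).trans one_le_two)

lemma price_nonneg (j : Fin n) : 0 ≤ price n u j := by
  obtain ⟨π, hπ⟩ := exists_perm_sum_eq_OPT u
  rw [price, sub_nonneg, ← hπ]
  exact sum_perm_le_OPTplus u π j

lemma sum_update_perm_le_OPTplus (π : Equiv.Perm (Fin n)) (i j : Fin n) :
    ∑ k, u k (Function.update π i j k) ≤ OPTplus n u j := by
  set σ := Function.update (⇑π) i j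
  have hσi : σ i = j := Function.update_self i j π
  have hσ : ∀ k, k ≠ i → σ k = π k := fun k hk => Function.update_of_ne hk j π
  refine sum_le_OPTplus u σ (fun ℓ hℓ => card_le_one.mpr fun a ha b hb => ?_) ?_
  · rw [mem_filter] at ha hb
    have hai : a ≠ i := fun h => hℓ (ha.2.symm.trans (h ▸ hσi))
    have hbi : b ≠ i := fun h => hℓ (hb.2.symm.trans (h ▸ hσi))
    exact π.injective ((hσ a hai).symm.trans (ha.2.trans (hb.2.symm.trans (hσ b hbi))))
  · have hsub : univ.filter (fun k => σ k = j) ⊆ {i, π.symm j} := by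
      intro k hk
      rw [mem_filter] at hk
      by_cases hki : k = i
      · exact mem_insert.2 (Or.inl hki)
      · rw [hσ k hki] at hk
        exact mem_insert.2 (Or.inr (mem_singleton.2 (π.eq_symm_apply.2 hk.2)))
    exact (card_le_card hsub).trans card_le_two

lemma sum_apply_update_add (σ : Fin n → Fin n) (i j : Fin n) :
    ∑ k, u k (Function.update σ i j k) + u i (σ i) = ∑ k, u k (σ k) + u i j := by
  simp_rw [Function.apply_update (fun k => u k)]
  rw [sum_update_of_mem (mem_univ i), sum_eq_add_sum_sdiff_singleton_of_mem (mem_univ i)]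
  ring

lemma sub_le_price {π : Equiv.Perm (Fin n)} (hπ : ∑ k, u k (π k) = OPT n u) (i j : Fin n) :
    u i j - u i (π i) ≤ price n u j := by
  have hswap := sum_apply_update_add u π i j
  have hfeasible := sum_update_perm_le_OPTplus u π i j
  rw [price, ← hπ]
  linarith

end Assignment

theorem large_weight_gets_favorite_general (n : ℕ)
    (u : Fin n → Fin n → ℝ)
    (lam : Fin n → ℝ)
    (hprices : ∑ j, price n (fun k j => lam k * u k j) j ≤ (n : ℝ))
    (i : Fin n) (ustar : ℝ) (hstar : IsGreatest (Set.range (u i)) ustar)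
    (hbig : ∀ j, u i j < ustar → lam i * (ustar - u i j) > (n : ℝ)) :
    ∀ π : Equiv.Perm (Fin n),
      (∑ k, lam k * u k (π k)) = OPT n (fun k j => lam k * u k j) →
      u i (π i) = ustar := by
  intro π hπ
  set u' : Fin n → Fin n → ℝ := fun k j => lam k * u k j
  obtain ⟨j₀, hj₀⟩ := hstar.1
  by_contra hne
  have hlt : u i (π i) < ustar := lt_of_le_of_ne (hstar.2 ⟨π i, rfl⟩) hne
  have hgain : lam i * (ustar - u i (π i)) ≤ price n u' j₀ := by
    have hgain' := sub_le_price u' hπ i j₀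
    simp only [u', hj₀] at hgain'
    linarith
  have hsingle : price n u' j₀ ≤ ∑ j, price n u' j :=
    single_le_sum (fun j _ => price_nonneg u' j) (mem_univ j₀)
  linarith [hbig (π i) hlt]

/-- A player whose weight is sufficiently large (so that
`λ_i·(u_i* − u_{ij}) > n` for every non-favorite item `j`) is allocated one of
her favorite items in every welfare-maximizing assignment, provided the VCG
prices for the scaled utilities sum to at most `n`. -/
theorem large_weight_gets_favorite (n : ℕ) (hn : 1 ≤ n)
    (u : Fin n → Fin n → ℝ) (hu : ∀ i j, 0 ≤ u i j ∧ u i j ≤ 1)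
    (lam : Fin n → ℝ) (hlam : ∀ i, 0 ≤ lam i)
    (hprices : ∑ j, price n (fun k j => lam k * u k j) j ≤ (n : ℝ))
    (i : Fin n) (ustar : ℝ) (hstar : IsGreatest (Set.range (u i)) ustar)
    (hbig : ∀ j, u i j < ustar → lam i * (ustar - u i j) > (n : ℝ)) :
    ∀ π : Equiv.Perm (Fin n),
      (∑ k, lam k * u k (π k)) = OPT n (fun k j => lam k * u k j) →
      u i (π i) = ustar :=
  large_weight_gets_favorite_general n u lam hprices i ustar hstar hbig
end

section
/- Let n ≥ 1, u ∈ ℝ^{n×n} with 0 ≤ u_{ij} ≤ 1, λ ∈ ℝ^n with λ_i ≥ 0, and let f₀ : (0,1] → ℝ be non-decreasing with f₀(z) ≤ 0 for all z. Let M > 1 and η(λ) := (Σ_i λ_i)/M − n²·f₀(1/(n·M)). Suppose x is a positive doubly stochastic matrix attaining OPT₀(λ). For each player i define the regularized VCG payment P_i := OPT₀(λ^{−i}) − (OPT₀(λ) − Σ_j λ_i·u_{ij}·x_{ij}), and let C_j be the VCG prices for the utilities u'_{ij} = λ_i·u_{ij}. Then for every player i, |P_i − Σ_j x_{ij}·C_j|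 ≤ η(λ): the payments charged by the regularized mechanism are within η(λ) of the unregularized VCG prices of the allocated bundle. -/
open Finset

/-- `x` is a positive doubly stochastic matrix. -/
def PosDoublyStochastic (n : ℕ) (x : Fin n → Fin n → ℝ) : Prop :=
  (∀ i j, 0 < x i j) ∧ (∀ i, ∑ j, x i j = 1) ∧ (∀ j, ∑ i, x i j = 1)

/-- The optimal regularized welfare. -/
noncomputable def OPT0 (n : ℕ) (u : Fin n → Fin n → ℝ) (f0 : ℝ → ℝ)
    (lam : Fin n → ℝ) : ℝ :=
  sSup {v | ∃ x : Fin n → Fin n → ℝ, PosDoublyStochastic n x ∧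
    v = (∑ i, ∑ j, f0 (x i j)) + ∑ i, ∑ j, lam i * u i j * x i j}

/-!
Write `w k j = λ k * u k j`, `A = OPT w` and `Aᵢ = OPT (update w i 0)` for the optimum without
player `i`. Regularization costs at most `η`: `OPT₀ ≤ OPT` by LP weak duality since `f₀ ≤ 0`, and
`(1 - 1/M) OPT + n² f₀(1/(nM)) ≤ OPT₀`, witnessed by mixing an optimal permutation matrix with the
uniform matrix. Hence both `OPT₀(λ) - A` and `OPT₀(λ⁻ⁱ) - Aᵢ` lie in `[-η, 0]`, and it remains to
pin the price of the bundle `x i` between `Aᵢ + ∑ j, w i j x i j - A` and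
`Aᵢ - ∑_{k ≠ i} ∑ j, w k j x k j`.

The lower bound holds because giving `i` a second copy of `j` on top of an optimal assignment of
the others is feasible. For the upper bound take item prices `p ≥ 0` that are optimal in the LP
duals of both assignment problems `w` and `update w i 0` at once: they dominate every VCG price,
and complementary slackness in the problem without `i` bounds `∑ j, x i j p j`. Such common prices
exist because a minimiser of the sum of the two dual objectives satisfies Hall's condition in both
demand graphs: otherwise raising the prices of an overdemanded set of items would lower the sum.
-/

open Finset Filter Topology

section DualValue

variable {ι : Type*} [Fintype ι] [Nonempty ι]

noncomputable def surplus (w : ι → ι → ℝ) (p : ι → ℝ) (k : ι) : ℝ :=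
  univ.sup' univ_nonempty fun j => w k j - p j

noncomputable def demand (w : ι → ι → ℝ) (p : ι → ℝ) (k : ι) : Finset ι :=
  {j | surplus w p k ≤ w k j - p j}

/-- The dual objective of the assignment problem at item prices `p`, each player's dual variable
being set to its least feasible value `surplus w p k`. -/
noncomputable def dualValue (w : ι → ι → ℝ) (p : ι → ℝ) : ℝ :=
  ∑ j, p j + ∑ k, surplus w p k

variable (w : ι → ι → ℝ)

lemma sub_le_surplus (p : ι → ℝ) (k j : ι) : w k j - p j ≤ surplus w p k :=
  le_sup' (fun j => w k j - p j) (mem_univ j)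

lemma surplus_le_surplus {p p' : ι → ℝ} (h : ∀ j, p j ≤ p' j) (k : ι) :
    surplus w p' k ≤ surplus w p k :=
  sup'_le _ _ fun j _ => by linarith [h j, sub_le_surplus w p k j]

lemma demand_eq_of_row_eq {w' : ι → ι → ℝ} {k : ι} (h : w' k = w k) (p : ι → ℝ) :
    demand w' p k = demand w p k := by
  ext j
  simp [demand, surplus, h]

lemma surplus_add_const (p : ι → ℝ) (c : ℝ) (k : ι) :
    surplus w (fun j => p j + c) k = surplus w p k - c := by
  simp only [surplus, sub_eq_add_neg, sup'_add, neg_add, add_assoc]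

lemma dualValue_add_const (p : ι → ℝ) (c : ℝ) :
    dualValue w (fun j => p j + c) = dualValue w p := by
  simp only [dualValue, surplus_add_const, sum_add_distrib, sum_sub_distrib]
  ring

lemma continuous_dualValue : Continuous (dualValue w) := by
  unfold dualValue surplus
  fun_prop

section Fractional

variable {x : ι → ι → ℝ} (hrow : ∀ k, ∑ j, x k j = 1) (hcol : ∀ j, ∑ k, x k j = 1)
include hrow hcol

lemma dualValue_eq_sum_mul_add_slack (p : ι → ℝ) :
    dualValue w p = ∑ k, ∑ j, w k j * x k j +
      ∑ k, ∑ j, x k j * (surplus w p k + p j - w k j) := by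
  have hsurplus : ∑ k, ∑ j, x k j * surplus w p k = ∑ k, surplus w p k := by
    simp [← sum_mul, hrow]
  have hprice : ∑ k, ∑ j, x k j * p j = ∑ j, p j := by
    rw [sum_comm]; simp [← sum_mul, hcol]
  simp only [mul_sub, mul_add, sum_add_distrib, sum_sub_distrib, hsurplus, hprice, dualValue]
  simp only [mul_comm (x _ _)]
  ring

lemma sum_mul_add_row_slack_le (hx : ∀ k j, 0 ≤ x k j) (p : ι → ℝ) (i : ι) :
    ∑ k, ∑ j, w k j * x k j + ∑ j, x i j * (surplus w p i + p j - w i j) ≤ dualValue w p := by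
  rw [dualValue_eq_sum_mul_add_slack w hrow hcol p]
  have hslack : ∀ k j, 0 ≤ x k j * (surplus w p k + p j - w k j) := fun k j =>
    mul_nonneg (hx k j) (by linarith [sub_le_surplus w p k j])
  exact (add_le_add_iff_left _).2 <|
    single_le_sum (fun k _ => sum_nonneg fun j _ => hslack k j) (mem_univ i)

lemma sum_mul_le_dualValue (hx : ∀ k j, 0 ≤ x k j) (p : ι → ℝ) :
    ∑ k, ∑ j, w k j * x k j ≤ dualValue w p := by
  rw [dualValue_eq_sum_mul_add_slack w hrow hcol p, le_add_iff_nonneg_right]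
  exact sum_nonneg fun k _ => sum_nonneg fun j _ =>
    mul_nonneg (hx k j) (by linarith [sub_le_surplus w p k j])

end Fractional

lemma add_sum_le_dualValue {p : ι → ℝ} (hp : ∀ j, 0 ≤ p j) {j₀ : ι} (hj₀ : p j₀ = 0) (j : ι) :
    p j + ∑ k, w k j₀ ≤ dualValue w p := by
  have hp_sum : p j ≤ ∑ l, p l := single_le_sum (fun l _ => hp l) (mem_univ j)
  have hw_sum : ∑ k, w k j₀ ≤ ∑ k, surplus w p k :=
    sum_le_sum fun k _ => by simpa [hj₀] using sub_le_surplus w p k j₀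
  unfold dualValue
  linarith

lemma exists_nonneg_add_const_eq_zero (p : ι → ℝ) :
    ∃ c, (∀ j, 0 ≤ p j + c) ∧ ∃ j, p j + c = 0 := by
  obtain ⟨j₀, hj₀⟩ := Finite.exists_min p
  exact ⟨-p j₀, fun j => by linarith [hj₀ j], j₀, by ring⟩

/-- Since `dualValue` is invariant under shifting all prices, it suffices to minimise over
normalised prices (nonnegative with a zero), on which `dualValue` is coercive. -/
lemma exists_forall_dualValue_add_le (w' : ι → ι → ℝ) :
    ∃ p, ∀ p', dualValue w p + dualValue w' p ≤ dualValue w p' + dualValue w' p' := by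
  set H : (ι → ℝ) → ℝ := fun p => dualValue w p + dualValue w' p with hH
  obtain ⟨j₁, hj₁⟩ := Finite.exists_min fun j₀ => ∑ k, (w k j₀ + w' k j₀)
  set m := ∑ k, (w k j₁ + w' k j₁)
  have hcoercive : ∀ p, (∀ j, 0 ≤ p j) → (∃ j₀, p j₀ = 0) → ∀ j, p j + m ≤ H p := by
    rintro p hp ⟨j₀, hj₀⟩ j
    have := add_sum_le_dualValue w hp hj₀ j
    have := add_sum_le_dualValue w' hp hj₀ j
    have := hj₁ j₀
    rw [sum_add_distrib] at this
    linarith [hp j]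
  set K : Set (ι → ℝ) := Set.Icc 0 fun _ => H 0 - m
  have h0K : (0 : ι → ℝ) ∈ K :=
    ⟨le_rfl, fun j => by simpa using hcoercive 0 (fun _ => le_rfl) ⟨j, rfl⟩ j⟩
  obtain ⟨p, -, hmin⟩ := isCompact_Icc.exists_isMinOn (f := H) ⟨0, h0K⟩
    ((continuous_dualValue w).add (continuous_dualValue w')).continuousOn
  refine ⟨p, fun p' => ?_⟩
  obtain ⟨c, hc, hc0⟩ := exists_nonneg_add_const_eq_zero p'
  have hshift : H (fun j => p' j + c) = H p' := by
    simp only [hH, dualValue_add_const]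
  change H p ≤ H p'
  rw [← hshift]
  by_cases hK : (fun j => p' j + c) ∈ K
  · exact isMinOn_iff.1 hmin _ hK
  · obtain ⟨j, hj⟩ : ∃ j, H 0 - m < p' j + c := by
      by_contra! h
      exact hK ⟨hc, h⟩
    linarith [hcoercive _ hc hc0 j, isMinOn_iff.1 hmin 0 h0K]

variable [DecidableEq ι]

lemma eventually_surplus_raise_le {p : ι → ℝ} {N : Finset ι} {k : ι} (hk : demand w p k ⊆ N) :
    ∀ᶠ δ in 𝓝 0, surplus w (fun j => p j + if j ∈ N then δ else 0) k ≤ surplus w p k - δ := by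
  have hcol : ∀ j, ∀ᶠ δ in 𝓝 (0 : ℝ),
      w k j - (p j + if j ∈ N then δ else 0) ≤ surplus w p k - δ := by
    intro j
    by_cases hj : j ∈ N
    · simp only [hj, if_true]
      exact Eventually.of_forall fun δ => by linarith [sub_le_surplus w p k j]
    · have hlt : w k j - p j < surplus w p k := by
        by_contra! h
        exact hj (hk (mem_filter.2 ⟨mem_univ j, h⟩))
      filter_upwards [eventually_lt_nhds (sub_pos.2 hlt)] with δ hδ
      simp only [hj, if_false, add_zero]
      linarith
  filter_upwards [eventually_all.2 hcol] with δ hδ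
  exact sup'_le _ _ fun j _ => hδ j

lemma eventually_dualValue_raise_le (p : ι → ℝ) (N : Finset ι) :
    ∀ᶠ δ in 𝓝[>] 0, dualValue w (fun j => p j + if j ∈ N then δ else 0) ≤
      dualValue w p + δ * (#N - #{k | demand w p k ⊆ N}) := by
  have hrows : ∀ᶠ δ in 𝓝 0, ∀ k ∈ ({k | demand w p k ⊆ N} : Finset ι),
      surplus w (fun j => p j + if j ∈ N then δ else 0) k ≤ surplus w p k - δ :=
    (eventually_all_finset _).2 fun k hk => eventually_surplus_raise_le w (mem_filter.1 hk).2
  filter_upwards [nhdsWithin_le_nhds hrows, self_mem_nhdsWithin] with δ hδ (hδ0 : 0 < δ)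
  have hsurplus : ∀ k, surplus w (fun j => p j + if j ∈ N then δ else 0) k ≤
      surplus w p k - if k ∈ ({k | demand w p k ⊆ N} : Finset ι) then δ else 0 := by
    intro k
    split_ifs with hk
    · exact hδ k hk
    · simpa using surplus_le_surplus w (fun j => by split_ifs <;> linarith) k
  have := sum_le_sum fun k (_ : k ∈ univ) => hsurplus k
  simp only [sum_sub_distrib, sum_ite_mem, univ_inter, sum_const, nsmul_eq_mul] at this
  simp only [dualValue, sum_add_distrib, sum_ite_mem, univ_inter, sum_const, nsmul_eq_mul]
  linarith

/-- At a common minimiser of the two dual values, raising the prices of an overdemanded set `N`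
would lower `dualValue w` by at least `δ` without raising `dualValue w'`, since the two markets
share all demand sets except that of player `i`. -/
lemma card_le_card_biUnion_demand {w' : ι → ι → ℝ} {i : ι} (hw : ∀ k ≠ i, w' k = w k)
    {p : ι → ℝ} (hp : ∀ p', dualValue w p + dualValue w' p ≤ dualValue w p' + dualValue w' p')
    (s : Finset ι) : #s ≤ #(s.biUnion (demand w p)) := by
  by_contra! hs
  set N := s.biUnion (demand w p)
  have hsub : s ⊆ ({k | demand w p k ⊆ N} : Finset ι) := fun k hk =>
    mem_filter.2 ⟨mem_univ k, subset_biUnion_of_mem _ hk⟩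
  have hsub' : s.erase i ⊆ ({k | demand w' p k ⊆ N} : Finset ι) := fun k hk => by
    rw [mem_filter, demand_eq_of_row_eq w (hw k (ne_of_mem_erase hk))]
    exact (mem_filter.1 (hsub (mem_of_mem_erase hk)))
  have hcard : (#N : ℝ) + 1 ≤ #s := by exact_mod_cast hs
  have hcard₁ : (#s : ℝ) ≤ #{k | demand w p k ⊆ N} := by exact_mod_cast card_le_card hsub
  have hcard₂ : (#s : ℝ) ≤ #{k | demand w' p k ⊆ N} + 1 := by
    have := card_le_card hsub'
    have := pred_card_le_card_erase (s := s) (a := i)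
    norm_cast
    omega
  obtain ⟨δ, h, h', hδ⟩ := ((eventually_dualValue_raise_le w p N).and
    ((eventually_dualValue_raise_le w' p N).and self_mem_nhdsWithin)).exists
  have hδ : 0 < δ := hδ
  have := hp fun j => p j + if j ∈ N then δ else 0
  nlinarith

end DualValue

section Assignment

variable {n : ℕ}

lemma finite_setOf_perm_sum (w : Fin n → Fin n → ℝ) :
    {v | ∃ π : Equiv.Perm (Fin n), v = ∑ i, w i (π i)}.Finite :=
  (Set.finite_range fun π : Equiv.Perm (Fin n) => ∑ i, w i (π i)).subset
    (by rintro _ ⟨π, rfl⟩; exact ⟨π, rfl⟩)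

lemma le_OPT (w : Fin n → Fin n → ℝ) (σ : Equiv.Perm (Fin n)) : ∑ k, w k (σ k) ≤ OPT n w :=
  le_csSup (finite_setOf_perm_sum w).bddAbove ⟨σ, rfl⟩

lemma exists_perm_OPT_eq (w : Fin n → Fin n → ℝ) :
    ∃ σ : Equiv.Perm (Fin n), OPT n w = ∑ k, w k (σ k) :=
  Set.Nonempty.csSup_mem (s := {v | ∃ π : Equiv.Perm (Fin n), v = ∑ i, w i (π i)}) ⟨_, 1, rfl⟩
    (finite_setOf_perm_sum w)

lemma OPT_le_sum {w : Fin n → Fin n → ℝ} {b : Fin n → ℝ} (hb : ∀ k j, w k j ≤ b k) :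
    OPT n w ≤ ∑ k, b k := by
  obtain ⟨σ, hσ⟩ := exists_perm_OPT_eq w
  exact hσ ▸ sum_le_sum fun k _ => hb k (σ k)

variable [NeZero n]

lemma dualValue_le_OPT_of_hall {w : Fin n → Fin n → ℝ} {p : Fin n → ℝ}
    (hall : ∀ s : Finset (Fin n), #s ≤ #(s.biUnion (demand w p))) : dualValue w p ≤ OPT n w := by
  obtain ⟨f, hf, hfd⟩ := (all_card_le_biUnion_card_iff_exists_injective _).1 hall
  let σ := Equiv.ofBijective f (Finite.injective_iff_bijective.1 hf)
  calc dualValue w p = ∑ k, (p (σ k) + surplus w p k) := by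
        rw [sum_add_distrib, Equiv.sum_comp σ p]; rfl
    _ ≤ ∑ k, w k (σ k) := sum_le_sum fun k _ => by
        have := (mem_filter.1 (hfd k)).2
        simp only [σ, Equiv.ofBijective_apply]
        linarith
    _ ≤ OPT n w := le_OPT w σ

lemma exists_common_optimal_dual {w w' : Fin n → Fin n → ℝ} {i : Fin n}
    (hw : ∀ k ≠ i, w' k = w k) :
    ∃ p : Fin n → ℝ, (∀ j, 0 ≤ p j) ∧ (∃ j, p j = 0) ∧
      dualValue w p ≤ OPT n w ∧ dualValue w' p ≤ OPT n w' := by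
  obtain ⟨p₀, hp₀⟩ := exists_forall_dualValue_add_le w w'
  obtain ⟨c, hc, hc0⟩ := exists_nonneg_add_const_eq_zero p₀
  set p := fun j => p₀ j + c
  have hp : ∀ p', dualValue w p + dualValue w' p ≤ dualValue w p' + dualValue w' p' := by
    simpa only [p, dualValue_add_const] using hp₀
  refine ⟨p, hc, hc0, dualValue_le_OPT_of_hall (card_le_card_biUnion_demand w hw hp),
    dualValue_le_OPT_of_hall (card_le_card_biUnion_demand w' (fun k hk => (hw k hk).symm) ?_)⟩
  exact fun p' => by linarith [hp p']

end Assignment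

section Prices

variable {n : ℕ}

lemma sum_sum_update_mul {ι : Type*} [Fintype ι] [DecidableEq ι] (w x : ι → ι → ℝ) (i : ι) :
    ∑ k, ∑ j, Function.update w i 0 k j * x k j =
      ∑ k, ∑ j, w k j * x k j - ∑ j, w i j * x i j := by
  have hrow : ∀ k, ∑ j, Function.update w i 0 k j * x k j =
      ∑ j, w k j * x k j - if k = i then ∑ j, w i j * x i j else 0 := by
    intro k
    by_cases hki : k = i
    · subst hki; simp
    · simp [hki]
  simp [hrow, sum_sub_distrib]

lemma sum_comp_le_sum_add {ι : Type*} [Fintype ι] [DecidableEq ι] {p : ι → ℝ}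
    (hp : ∀ l, 0 ≤ p l) {π : ι → ι} {j : ι} (h₁ : ∀ ℓ ≠ j, #{i | π i = ℓ} ≤ 1)
    (h₂ : #{i | π i = j} ≤ 2) : ∑ i, p (π i) ≤ ∑ l, p l + p j := by
  rw [← sum_fiberwise' univ π p]
  calc ∑ l, ∑ i with π i = l, p l = ∑ l, (#{i | π i = l} : ℝ) * p l := by
        simp only [sum_const, nsmul_eq_mul]
    _ ≤ ∑ l, (1 + if l = j then 1 else 0) * p l := by
        refine sum_le_sum fun l _ => mul_le_mul_of_nonneg_right ?_ (hp l)
        split_ifs with hl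
        · rw [one_add_one_eq_two, hl]; exact_mod_cast h₂
        · simpa using h₁ l hl
    _ = ∑ l, p l + p j := by simp [add_mul, sum_add_distrib]

lemma finite_setOf_OPTplus (w : Fin n → Fin n → ℝ) (j : Fin n) :
    {v | ∃ π : Fin n → Fin n, (∀ ℓ : Fin n, ℓ ≠ j → #{i | π i = ℓ} ≤ 1) ∧
      #{i | π i = j} ≤ 2 ∧ v = ∑ i, w i (π i)}.Finite :=
  (Set.finite_range fun π : Fin n → Fin n => ∑ i, w i (π i)).subset
    (by rintro _ ⟨π, -, -, rfl⟩; exact ⟨π, rfl⟩)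

lemma OPTplus_le_dualValue_add [NeZero n] {w : Fin n → Fin n → ℝ} {p : Fin n → ℝ}
    (hp : ∀ l, 0 ≤ p l) (j : Fin n) : OPTplus n w j ≤ dualValue w p + p j := by
  refine csSup_le ⟨_, id, fun ℓ _ => by simp [filter_eq'], by simp [filter_eq'], rfl⟩ ?_
  rintro _ ⟨π, h₁, h₂, rfl⟩
  have := sum_comp_le_sum_add hp h₁ h₂
  calc ∑ i, w i (π i) ≤ ∑ i, (surplus w p i + p (π i)) :=
        sum_le_sum fun i _ => by linarith [sub_le_surplus w p i (π i)]
    _ ≤ dualValue w p + p j := by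
        rw [sum_add_distrib, dualValue]
        linarith

/-- Witness: give player `i` item `j` on top of an optimal assignment of the others, so that only
item `j` may be used twice. -/
lemma OPT_update_add_le_OPTplus (w : Fin n → Fin n → ℝ) (i j : Fin n) :
    OPT n (Function.update w i 0) + w i j ≤ OPTplus n w j := by
  obtain ⟨σ, hσ⟩ := exists_perm_OPT_eq (Function.update w i 0)
  let π := Function.update (⇑σ) i j
  have hfiber : ∀ ℓ, ({k | π k = ℓ} : Finset (Fin n)) ⊆ {i, σ.symm ℓ} := fun ℓ k hk => by
    by_cases hki : k = i
    · simp [hki]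
    · simp only [mem_filter, mem_univ, true_and, π, Function.update_of_ne hki] at hk
      simp [← hk]
  have hfiber' : ∀ ℓ ≠ j, ({k | π k = ℓ} : Finset (Fin n)) ⊆ {σ.symm ℓ} := fun ℓ hℓ k hk => by
    have hki : k ≠ i := by
      rintro rfl
      simp only [mem_filter, mem_univ, true_and, π, Function.update_self] at hk
      exact hℓ hk.symm
    simpa [hki] using hfiber ℓ hk
  have hval : ∑ k, w k (π k) = OPT n (Function.update w i 0) + w i j := by
    have : ∀ k, w k (π k) = Function.update w i 0 k (σ k) + if k = i then w i j else 0 := by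
      intro k
      by_cases hki : k = i
      · subst hki; simp [π]
      · simp [π, hki]
    simp [this, sum_add_distrib, hσ]
  refine le_csSup (finite_setOf_OPTplus w j).bddAbove ⟨π, fun ℓ hℓ => ?_, ?_, hval.symm⟩
  · exact (card_le_card (hfiber' ℓ hℓ)).trans (card_singleton _).le
  · exact (card_le_card (hfiber j)).trans (card_le_two)

lemma price_le [NeZero n] {w : Fin n → Fin n → ℝ} {p : Fin n → ℝ} (hp : ∀ l, 0 ≤ p l)
    (hopt : dualValue w p ≤ OPT n w) (j : Fin n) : price n w j ≤ p j := by
  rw [price]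
  linarith [OPTplus_le_dualValue_add (w := w) hp j]

lemma OPT_update_add_le_sum_mul_price {x : Fin n → ℝ} (hx : ∀ j, 0 ≤ x j) (hx₁ : ∑ j, x j = 1)
    (w : Fin n → Fin n → ℝ) (i : Fin n) :
    OPT n (Function.update w i 0) + ∑ j, w i j * x j ≤ ∑ j, x j * price n w j + OPT n w := by
  have hlow : ∀ j, OPT n (Function.update w i 0) + w i j - OPT n w ≤ price n w j := fun j => by
    rw [price]
    linarith [OPT_update_add_le_OPTplus w i j]
  have := sum_le_sum fun j (_ : j ∈ univ) => mul_le_mul_of_nonneg_left (hlow j) (hx j)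
  simp only [mul_sub, mul_add, sum_sub_distrib, sum_add_distrib, ← sum_mul, hx₁, one_mul] at this
  simp only [mul_comm (w i _)]
  linarith

/-- The prices `p` bound the VCG prices, and the slack of row `i` in the dual of the market
without player `i` bounds what the bundle of `i` costs at `p`. -/
lemma sum_mul_price_add_le [NeZero n] {x : Fin n → Fin n → ℝ} (hx : PosDoublyStochastic n x)
    {w : Fin n → Fin n → ℝ} {i : Fin n} {p : Fin n → ℝ} (hp : ∀ j, 0 ≤ p j) (hp₀ : ∃ j, p j = 0)
    (hopt : dualValue w p ≤ OPT n w)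
    (hopt' : dualValue (Function.update w i 0) p ≤ OPT n (Function.update w i 0)) :
    ∑ j, x i j * price n w j + ∑ k, ∑ j, w k j * x k j ≤
      OPT n (Function.update w i 0) + ∑ j, w i j * x i j := by
  obtain ⟨hx₀, hrow, hcol⟩ := hx
  obtain ⟨j₀, hj₀⟩ := hp₀
  set w' := Function.update w i 0
  have hsurplus : 0 ≤ surplus w' p i := by
    simpa [w', hj₀] using sub_le_surplus w' p i j₀
  have hslack := sum_mul_add_row_slack_le w' hrow hcol (fun k j => (hx₀ k j).le) p i
  have hrow_slack : ∑ j, x i j * (surplus w' p i + p j - w' i j) =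
      surplus w' p i + ∑ j, x i j * p j := by
    simp [w', mul_add, sum_add_distrib, ← sum_mul, hrow]
  have hprice : ∑ j, x i j * price n w j ≤ ∑ j, x i j * p j :=
    sum_le_sum fun j _ => mul_le_mul_of_nonneg_left (price_le hp hopt j) (hx₀ i j).le
  rw [hrow_slack, sum_sum_update_mul] at hslack
  linarith

end Prices

section Regularized

variable {n : ℕ}

lemma PosDoublyStochastic.le_one {x : Fin n → Fin n → ℝ} (hx : PosDoublyStochastic n x)
    (i j : Fin n) : x i j ≤ 1 :=
  hx.2.1 i ▸ single_le_sum (fun j' _ => (hx.1 i j').le) (mem_univ j)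

lemma posDoublyStochastic_perm_add_const (σ : Equiv.Perm (Fin n)) {a c : ℝ} (ha : 0 ≤ a)
    (hc : 0 < c) (hac : a + n * c = 1) :
    PosDoublyStochastic n fun k l => a * (if σ k = l then 1 else 0) + c := by
  refine ⟨fun k l => by positivity, fun k => ?_, fun l => ?_⟩
  · simp [sum_add_distrib, hac]
  · simp [sum_add_distrib, ← Equiv.eq_symm_apply, hac]

lemma sum_sum_f0_nonpos {f0 : ℝ → ℝ} (hf0le : ∀ z : ℝ, 0 < z → z ≤ 1 → f0 z ≤ 0)
    {x : Fin n → Fin n → ℝ} (hx : PosDoublyStochastic n x) : ∑ i, ∑ j, f0 (x i j) ≤ 0 :=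
  sum_nonpos fun i _ => sum_nonpos fun j _ => hf0le _ (hx.1 i j) (hx.le_one i j)

variable [NeZero n] (u : Fin n → Fin n → ℝ) {f0 : ℝ → ℝ}
  (hf0le : ∀ z : ℝ, 0 < z → z ≤ 1 → f0 z ≤ 0)
include hf0le

lemma sum_f0_add_sum_mul_le_dualValue (lam : Fin n → ℝ) {x : Fin n → Fin n → ℝ}
    (hx : PosDoublyStochastic n x) (p : Fin n → ℝ) :
    (∑ i, ∑ j, f0 (x i j)) + ∑ i, ∑ j, lam i * u i j * x i j ≤
      dualValue (fun k j => lam k * u k j) p := by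
  have := sum_mul_le_dualValue (fun k j => lam k * u k j) hx.2.1 hx.2.2 (fun k j => (hx.1 k j).le) p
  linarith [sum_sum_f0_nonpos hf0le hx]

lemma OPT0_le_dualValue (lam : Fin n → ℝ) (p : Fin n → ℝ) :
    OPT0 n u f0 lam ≤ dualValue (fun k j => lam k * u k j) p := by
  have hn : (0 : ℝ) < n := by exact_mod_cast Nat.pos_of_neZero n
  have huniform : PosDoublyStochastic n fun _ _ => 1 / (n : ℝ) := by
    simpa using posDoublyStochastic_perm_add_const 1 le_rfl (by positivity : (0 : ℝ) < 1 / n)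
      (by field_simp; ring)
  refine csSup_le ⟨_, _, huniform, rfl⟩ ?_
  rintro _ ⟨x, hx, rfl⟩
  exact sum_f0_add_sum_mul_le_dualValue u hf0le lam hx p

lemma mul_OPT_add_le_OPT0 (hu : ∀ i j, 0 ≤ u i j) {lam : Fin n → ℝ} (hlam : ∀ i, 0 ≤ lam i)
    (hf0mono : ∀ z w : ℝ, 0 < z → z ≤ w → w ≤ 1 → f0 z ≤ f0 w) {a c : ℝ} (ha : 0 ≤ a)
    (hc : 0 < c) (hac : a + n * c = 1) :
    a * OPT n (fun k j => lam k * u k j) + n ^ 2 * f0 c ≤ OPT0 n u f0 lam := by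
  obtain ⟨σ, hσ⟩ := exists_perm_OPT_eq fun k j => lam k * u k j
  set y : Fin n → Fin n → ℝ := fun k l => a * (if σ k = l then 1 else 0) + c
  have hy := posDoublyStochastic_perm_add_const σ ha hc hac
  have hcy : ∀ k l, c ≤ y k l := fun k l => by
    have : 0 ≤ a * (if σ k = l then 1 else 0) := by positivity
    linarith
  have hbdd : BddAbove {v | ∃ x : Fin n → Fin n → ℝ, PosDoublyStochastic n x ∧
      v = (∑ i, ∑ j, f0 (x i j)) + ∑ i, ∑ j, lam i * u i j * x i j} := by
    refine ⟨dualValue (fun k j => lam k * u k j) 0, ?_⟩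
    rintro _ ⟨x, hx, rfl⟩
    exact sum_f0_add_sum_mul_le_dualValue u hf0le lam hx 0
  have hrow : ∀ k, a * (lam k * u k (σ k)) ≤ ∑ l, lam k * u k l * y k l := by
    intro k
    have : 0 ≤ c * ∑ l, lam k * u k l :=
      mul_nonneg hc.le (sum_nonneg fun l _ => mul_nonneg (hlam k) (hu k l))
    simp only [y, mul_add, mul_ite, mul_one, mul_zero, sum_add_distrib, sum_ite_eq, mem_univ,
      if_true, ← sum_mul]
    nlinarith
  calc a * OPT n (fun k j => lam k * u k j) + n ^ 2 * f0 c
      = ∑ k, a * (lam k * u k (σ k)) + ∑ _k : Fin n, ∑ _l : Fin n, f0 c := by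
        simp only [hσ, mul_sum, sum_const, card_univ, Fintype.card_fin, nsmul_eq_mul]
        ring
    _ ≤ ∑ k, ∑ l, lam k * u k l * y k l + ∑ k, ∑ l, f0 (y k l) := by
        exact add_le_add (sum_le_sum fun k _ => hrow k) (sum_le_sum fun k _ => sum_le_sum fun l _ =>
          hf0mono c (y k l) hc (hcy k l) (hy.le_one k l))
    _ ≤ OPT0 n u f0 lam := by
        rw [add_comm]
        exact le_csSup hbdd ⟨y, hy, rfl⟩

lemma OPT_sub_le_OPT0 (hu : ∀ i j, 0 ≤ u i j ∧ u i j ≤ 1) {μ lam : Fin n → ℝ}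
    (hμ : ∀ i, 0 ≤ μ i) (hμlam : ∀ i, μ i ≤ lam i)
    (hf0mono : ∀ z w : ℝ, 0 < z → z ≤ w → w ≤ 1 → f0 z ≤ f0 w) {M : ℝ} (hM : 1 < M) :
    OPT n (fun k j => μ k * u k j) - ((∑ k, lam k) / M - n ^ 2 * f0 (1 / (n * M))) ≤
      OPT0 n u f0 μ := by
  have hM₀ : 0 < M := by linarith
  have hn : (0 : ℝ) < n := by exact_mod_cast Nat.pos_of_neZero n
  have hS : OPT n (fun k j => μ k * u k j) / M ≤ (∑ k, lam k) / M := by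
    gcongr
    exact OPT_le_sum fun k j => (mul_le_of_le_one_right (hμ k) (hu k j).2).trans (hμlam k)
  calc _ ≤ (1 - 1 / M) * OPT n (fun k j => μ k * u k j) + n ^ 2 * f0 (1 / (n * M)) := by
        rw [sub_mul, one_mul, one_div_mul_eq_div]
        linarith
    _ ≤ OPT0 n u f0 μ := mul_OPT_add_le_OPT0 u hf0le (fun i j => (hu i j).1) hμ hf0mono
        (by rw [sub_nonneg, div_le_one hM₀]; exact hM.le) (by positivity) (by field_simp; ring)

end Regularized

lemma update_zero_mul_eq {ι : Type*} [DecidableEq ι] (lam : ι → ℝ) (u : ι → ι → ℝ) (i : ι) :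
    (fun k j => Function.update lam i 0 k * u k j) =
      Function.update (fun k j => lam k * u k j) i 0 := by
  ext k j
  rcases eq_or_ne k i with rfl | hki <;> simp [*]

/-- The payments charged by the regularized mechanism are within `η(λ)` of the
unregularized VCG prices of the allocated bundle:
`|P_i − ∑ j, x_{ij}·C_j| ≤ η(λ)`. -/
theorem regularized_payments_close_to_vcg_prices
    (n : ℕ) (hn : 1 ≤ n)
    (u : Fin n → Fin n → ℝ) (hu : ∀ i j, 0 ≤ u i j ∧ u i j ≤ 1)
    (lam : Fin n → ℝ) (hlam : ∀ i, 0 ≤ lam i)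
    (f0 : ℝ → ℝ)
    (hf0le : ∀ z : ℝ, 0 < z → z ≤ 1 → f0 z ≤ 0)
    (hf0mono : ∀ z w : ℝ, 0 < z → z ≤ w → w ≤ 1 → f0 z ≤ f0 w)
    (M : ℝ) (hM : 1 < M)
    (x : Fin n → Fin n → ℝ) (hx : PosDoublyStochastic n x)
    (hatt : (∑ i, ∑ j, f0 (x i j)) + (∑ i, ∑ j, lam i * u i j * x i j)
      = OPT0 n u f0 lam) :
    ∀ i : Fin n,
      |(OPT0 n u f0 (Function.update lam i 0) -
          (OPT0 n u f0 lam - ∑ j, lam i * u i j * x i j)) -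
        ∑ j, x i j * price n (fun k j => lam k * u k j) j|
      ≤ (∑ i, lam i) / M - (n : ℝ)^2 * f0 (1 / ((n : ℝ) * M)) := by
  intro i
  have : NeZero n := ⟨by omega⟩
  set w : Fin n → Fin n → ℝ := fun k j => lam k * u k j
  have hlam' : ∀ k, 0 ≤ Function.update lam i 0 k :=
    le_update_iff.2 ⟨le_rfl, fun k _ => hlam k⟩
  obtain ⟨p, hp, hp₀, hopt, hopt'⟩ :=
    exists_common_optimal_dual (w := w) (w' := Function.update w i 0) fun k hk =>
      Function.update_of_ne hk 0 w
  have hZ := OPT0_le_dualValue u hf0le lam p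
  have hZ' := OPT0_le_dualValue u hf0le (Function.update lam i 0) p
  have hgap := OPT_sub_le_OPT0 u hf0le hu hlam (fun _ => le_rfl) hf0mono hM
  have hgap' := OPT_sub_le_OPT0 u hf0le hu hlam' (update_le_self_iff.2 (hlam i)) hf0mono hM
  rw [update_zero_mul_eq] at hZ' hgap'
  have hF := sum_sum_f0_nonpos hf0le hx
  have hprice_low := OPT_update_add_le_sum_mul_price (fun j => (hx.1 i j).le) (hx.2.1 i) w i
  have hprice_up := sum_mul_price_add_le hx hp hp₀ hopt hopt'
  have hatt' : ∑ k, ∑ j, f0 (x k j) + ∑ k, ∑ j, w k j * x k j = OPT0 n u f0 lam := hatt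
  change |_ - (_ - ∑ j, w i j * x i j) - _| ≤ _
  rw [abs_le]
  constructor <;> linarith
end
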